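/- arXiv:2006.14963 — 3 statements merged into one kernel-verified Lean document; each statement's English description precedes it below -/
import Mathlib

section
/- Let c ≤ a < x be real numbers, let μ > −1, let α ≥ 0 be a non-integer real number and set n = ⌈α⌉. Then the Riemann–Liouville fractional derivative of order α with base point a of the function t ↦ (t − c)^μ, evaluated at x, satisfies (1/Γ(n−α)) · (dⁿ/dxⁿ) ∫_a^x (x − t)^{n−α−1} (t − c)^μ dt = (Γ(μ+1)/Γ(μ+n−α+1)) · (dⁿ/dxⁿ)[ (x − c)^{μ+n−α} · G_{n−α}((a−c)/(x−c), μ+1) ], where G_β(r, p) := 1 − B_r(p, β)/B(p, β) and both n-th derivatives are taken with respect to x. -/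
/-! The substitution `t = c + (y - c) s` turns `∫_a^y (y-t)^(β-1) (t-c)^μ dt` into
`(y-c)^(μ+β) ∫_r^1 s^μ (1-s)^(β-1) ds` with `r = (a-c)/(y-c)`, and that tail of the Beta
integral is `B(μ+1, β) G_β(r, μ+1)`. Since the identity holds for every `y > a`, hence near
`x`, the `n`-th derivatives agree, and `B(μ+1, β) / Γ(β) = Γ(μ+1) / Γ(μ+β+1)` with
`β = n - α > 0`. -/

/-- The (complete) Beta function `B(p, q) = ∫_0^1 t^{p-1} (1-t)^{q-1} dt`. -/
noncomputable def betaFun (p q : ℝ) : ℝ :=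
  ∫ t in (0:ℝ)..1, t ^ (p - 1) * (1 - t) ^ (q - 1)

/-- The incomplete Beta function `B_r(p, q) = ∫_0^r t^{p-1} (1-t)^{q-1} dt`. -/
noncomputable def incBetaFun (r p q : ℝ) : ℝ :=
  ∫ t in (0:ℝ)..r, t ^ (p - 1) * (1 - t) ^ (q - 1)

/-- `G_β(r, p) := 1 - B_r(p, β) / B(p, β)`. -/
noncomputable def Gfun (β r p : ℝ) : ℝ :=
  1 - incBetaFun r p β / betaFun p β

open MeasureTheory Set

lemma ofReal_betaIntegrand {t : ℝ} (ht : t ∈ Icc (0 : ℝ) 1) (p q : ℝ) :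
    ((t ^ (p - 1) * (1 - t) ^ (q - 1) : ℝ) : ℂ)
      = (t : ℂ) ^ (p - 1 : ℂ) * (1 - t : ℂ) ^ (q - 1 : ℂ) := by
  rw [Complex.ofReal_mul, Complex.ofReal_cpow ht.1, Complex.ofReal_cpow (sub_nonneg.2 ht.2)]
  push_cast
  rfl

lemma intervalIntegrable_betaIntegrand {p q : ℝ} (hp : 0 < p) (hq : 0 < q) :
    IntervalIntegrable (fun t : ℝ => t ^ (p - 1) * (1 - t) ^ (q - 1)) volume 0 1 := by
  have hC : IntervalIntegrable
      (fun t : ℝ => ((t ^ (p - 1) * (1 - t) ^ (q - 1) : ℝ) : ℂ)) volume 0 1 := by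
    refine (Complex.betaIntegral_convergent (u := p) (v := q) (by simpa) (by simpa)).congr_uIoo
      fun t ht => (ofReal_betaIntegrand ?_ p q).symm
    rw [uIoo_of_le zero_le_one] at ht
    exact Ioo_subset_Icc_self ht
  rw [intervalIntegrable_iff] at hC ⊢
  simpa [IntegrableOn] using hC.re

lemma betaFun_eq_beta {p q : ℝ} (hp : 0 < p) (hq : 0 < q) :
    betaFun p q = ProbabilityTheory.beta p q := by
  rw [ProbabilityTheory.beta_eq_betaIntegralReal p q hp hq, Complex.betaIntegral, betaFun,
    ← Complex.ofReal_re (∫ t in (0 : ℝ)..1, _), ← intervalIntegral.integral_ofReal]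
  congr 1
  refine intervalIntegral.integral_congr fun t ht => ?_
  rw [uIcc_of_le zero_le_one] at ht
  exact ofReal_betaIntegrand ht p q

lemma integral_betaIntegrand_eq_betaFun_sub_incBetaFun {p q r : ℝ} (hp : 0 < p) (hq : 0 < q)
    (hr : r ∈ Icc (0 : ℝ) 1) :
    ∫ t in r..1, t ^ (p - 1) * (1 - t) ^ (q - 1) = betaFun p q - incBetaFun r p q := by
  have h := intervalIntegrable_betaIntegrand hp hq
  rw [betaFun, incBetaFun, ← intervalIntegral.integral_add_adjacent_intervals
    (h.mono_set (uIcc_subset_uIcc_left (Icc_subset_uIcc hr)))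
    (h.mono_set (uIcc_subset_uIcc_right (Icc_subset_uIcc hr)))]
  ring

lemma betaFun_mul_Gfun {p β : ℝ} (r : ℝ) (h : betaFun p β ≠ 0) :
    betaFun p β * Gfun β r p = betaFun p β - incBetaFun r p β := by
  rw [Gfun]
  field_simp

lemma integral_sub_rpow_mul_sub_rpow_eq {a c y β μ : ℝ} (hca : c ≤ a) (hay : a < y) :
    ∫ t in a..y, (y - t) ^ (β - 1) * (t - c) ^ μ
      = (y - c) ^ (μ + β) * ∫ s in (a - c) / (y - c)..1, s ^ μ * (1 - s) ^ (β - 1) := by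
  have hd : 0 < y - c := by linarith
  have hr1 : (a - c) / (y - c) ≤ 1 := (div_le_one hd).2 (by linarith)
  have hsubst := intervalIntegral.smul_integral_comp_mul_add (a := (a - c) / (y - c)) (b := 1)
    (fun t => (y - t) ^ (β - 1) * (t - c) ^ μ) (y - c) c
  rw [show (y - c) * ((a - c) / (y - c)) + c = a by field_simp; ring,
    show (y - c) * 1 + c = y by ring] at hsubst
  rw [← hsubst, smul_eq_mul, ← intervalIntegral.integral_const_mul,
    ← intervalIntegral.integral_const_mul]
  refine intervalIntegral.integral_congr fun s hs => ?_
  rw [uIcc_of_le hr1] at hs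
  have hs0 : 0 ≤ s := (div_nonneg (by linarith) hd.le).trans hs.1
  rw [show y - ((y - c) * s + c) = (y - c) * (1 - s) by ring,
    show (y - c) * s + c - c = (y - c) * s by ring,
    Real.mul_rpow hd.le (by linarith [hs.2]), Real.mul_rpow hd.le hs0,
    show μ + β = 1 + (β - 1) + μ by ring, Real.rpow_add hd, Real.rpow_add hd, Real.rpow_one]
  ring

lemma integral_sub_rpow_mul_sub_rpow_eq_betaFun_mul_Gfun {a c y β μ : ℝ} (hca : c ≤ a)
    (hay : a < y) (hβ : 0 < β) (hμ : -1 < μ) :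
    ∫ t in a..y, (y - t) ^ (β - 1) * (t - c) ^ μ
      = betaFun (μ + 1) β * ((y - c) ^ (μ + β) * Gfun β ((a - c) / (y - c)) (μ + 1)) := by
  have hd : 0 < y - c := by linarith
  have hr : (a - c) / (y - c) ∈ Icc (0 : ℝ) 1 :=
    ⟨div_nonneg (by linarith) hd.le, (div_le_one hd).2 (by linarith)⟩
  have hμ1 : 0 < μ + 1 := by linarith
  have hB : betaFun (μ + 1) β ≠ 0 := by
    rw [betaFun_eq_beta hμ1 hβ]
    exact (ProbabilityTheory.beta_pos hμ1 hβ).ne'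
  have hsplit := integral_betaIntegrand_eq_betaFun_sub_incBetaFun hμ1 hβ hr
  rw [add_sub_cancel_right] at hsplit
  rw [integral_sub_rpow_mul_sub_rpow_eq hca hay, hsplit, mul_left_comm, betaFun_mul_Gfun _ hB]

theorem riemannLiouville_deriv_power_nonneg_order_general
    (a c x μ α : ℝ) (n : ℕ) (hca : c ≤ a) (hax : a < x) (hμ : -1 < μ)
    (hαint : ∀ m : ℤ, α ≠ (m : ℝ)) (hn : n = ⌈α⌉₊) :
    (1 / Real.Gamma ((n : ℝ) - α)) *
        iteratedDeriv n
          (fun y => ∫ t in a..y, (y - t) ^ ((n : ℝ) - α - 1) * (t - c) ^ μ) x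
      = (Real.Gamma (μ + 1) / Real.Gamma (μ + (n : ℝ) - α + 1)) *
        iteratedDeriv n
          (fun y => (y - c) ^ (μ + (n : ℝ) - α) *
            Gfun ((n : ℝ) - α) ((a - c) / (y - c)) (μ + 1)) x := by
  have hβ : 0 < (n : ℝ) - α :=
    sub_pos.2 <| (hn ▸ Nat.le_ceil α).lt_of_ne (by exact_mod_cast hαint n)
  have hμ1 : 0 < μ + 1 := by linarith
  have hlocal : (fun y => ∫ t in a..y, (y - t) ^ ((n : ℝ) - α - 1) * (t - c) ^ μ)
      =ᶠ[nhds x] fun y => betaFun (μ + 1) ((n : ℝ) - α) * ((y - c) ^ (μ + (n : ℝ) - α) *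
        Gfun ((n : ℝ) - α) ((a - c) / (y - c)) (μ + 1)) := by
    filter_upwards [Ioi_mem_nhds hax] with y hy
    rw [integral_sub_rpow_mul_sub_rpow_eq_betaFun_mul_Gfun hca hy hβ hμ, add_sub_assoc]
  rw [hlocal.iteratedDeriv_eq, iteratedDeriv_const_mul_field, betaFun_eq_beta hμ1 hβ,
    ProbabilityTheory.beta, show μ + 1 + ((n : ℝ) - α) = μ + n - α + 1 by ring]
  have hΓ : Real.Gamma ((n : ℝ) - α) ≠ 0 := (Real.Gamma_pos_of_pos hβ).ne'
  field_simp

/-- Case `α ≥ 0` (non-integer, `n = ⌈α⌉`) of the Riemann–Liouville fractional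
derivative of the power function `t ↦ (t - c)^μ` with base point `a`, in the
compact form obtained before applying the Leibniz rule:
`(1/Γ(n-α)) (dⁿ/dxⁿ) ∫_a^x (x-t)^{n-α-1} (t-c)^μ dt
  = (Γ(μ+1)/Γ(μ+n-α+1)) (dⁿ/dxⁿ)[ (x-c)^{μ+n-α} G_{n-α}((a-c)/(x-c), μ+1) ]`. -/
theorem riemannLiouville_deriv_power_nonneg_order
    (a c x μ α : ℝ) (n : ℕ) (hca : c ≤ a) (hax : a < x) (hμ : -1 < μ)
    (hα : 0 ≤ α) (hαint : ∀ m : ℤ, α ≠ (m : ℝ)) (hn : n = ⌈α⌉₊) :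
    (1 / Real.Gamma ((n : ℝ) - α)) *
        iteratedDeriv n
          (fun y => ∫ t in a..y, (y - t) ^ ((n : ℝ) - α - 1) * (t - c) ^ μ) x
      = (Real.Gamma (μ + 1) / Real.Gamma (μ + (n : ℝ) - α + 1)) *
        iteratedDeriv n
          (fun y => (y - c) ^ (μ + (n : ℝ) - α) *
            Gfun ((n : ℝ) - α) ((a - c) / (y - c)) (μ + 1)) x :=
  riemannLiouville_deriv_power_nonneg_order_general a c x μ α n hca hax hμ hαint hn
end

section
/- Let a < x be real numbers, let α < 0, and let f be given on [a, x] by a convergent power series f(t) = Σ_{k=0}^∞ c_k (t − a)^k whose radius of convergence exceeds x − a. Then the Riemann–Liouville fractional derivative of order α of f with base point a can be computed term by term: (1/Γ(−α)) ∫_a^x (x − t)^{−α−1} f(t) dt = Σ_{k=0}^∞ c_k · (Γ(k+1)/Γ(k−α+1)) · (x − a)^{k−α}, the series on the right-hand side being convergent. -/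
open MeasureTheory Real Set

/-! The series `Σ c_k (t - a)^k` is dominated on `[a, x]` by `Σ |c_k| R^k`, so dominated
convergence against the integrable kernel `(x - t)^(-α-1)` lets us integrate term by term.
Each term is a Beta integral: substituting `t = a + (x - a) u` gives
`∫_a^x (x - t)^(q-1) (t - a)^(p-1) dt = B(p, q) (x - a)^(p+q-1)`, where
`B(p, q) = Γ(p)Γ(q)/Γ(p+q)`, `p = k + 1` and `q = -α`. -/

theorem integral_rpow_mul_one_sub_rpow {p q : ℝ} (hp : 0 < p) (hq : 0 < q) :
    ∫ u in (0:ℝ)..1, u ^ (p - 1) * (1 - u) ^ (q - 1) = Gamma p * Gamma q / Gamma (p + q) := by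
  apply Complex.ofReal_injective
  have hbeta := Complex.betaIntegral_eq_Gamma_mul_div p q (by simpa) (by simpa)
  rw [Complex.betaIntegral] at hbeta
  push_cast [← Complex.Gamma_ofReal]
  rw [← hbeta, ← intervalIntegral.integral_ofReal]
  refine intervalIntegral.integral_congr fun u hu => ?_
  rw [uIcc_of_le zero_le_one] at hu
  push_cast [Complex.ofReal_cpow hu.1, Complex.ofReal_cpow (sub_nonneg.2 hu.2)]
  rfl

theorem integral_sub_rpow_mul_rpow_sub {a x p q : ℝ} (hax : a < x) (hp : 0 < p) (hq : 0 < q) :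
    ∫ t in a..x, (x - t) ^ (q - 1) * (t - a) ^ (p - 1)
      = Gamma p * Gamma q / Gamma (p + q) * (x - a) ^ (p + q - 1) := by
  have hxa : 0 < x - a := sub_pos.2 hax
  have hsubst := intervalIntegral.integral_comp_mul_add
    (fun t => (x - t) ^ (q - 1) * (t - a) ^ (p - 1)) hxa.ne' a (a := 0) (b := 1)
  rw [mul_zero, zero_add, mul_one, sub_add_cancel] at hsubst
  have hscaled :
      ∫ u in (0:ℝ)..1, (x - ((x - a) * u + a)) ^ (q - 1) * ((x - a) * u + a - a) ^ (p - 1)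
      = (x - a) ^ (q - 1) * (x - a) ^ (p - 1) *
          ∫ u in (0:ℝ)..1, u ^ (p - 1) * (1 - u) ^ (q - 1) := by
    rw [← intervalIntegral.integral_const_mul]
    refine intervalIntegral.integral_congr fun u hu => ?_
    rw [uIcc_of_le zero_le_one] at hu
    rw [show x - ((x - a) * u + a) = (x - a) * (1 - u) by ring, add_sub_cancel_right,
      mul_rpow hxa.le (sub_nonneg.2 hu.2), mul_rpow hxa.le hu.1]
    ring
  have hpow : (x - a) * ((x - a) ^ (q - 1) * (x - a) ^ (p - 1)) = (x - a) ^ (p + q - 1) := by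
    nth_rewrite 1 [← rpow_one (x - a)]
    rw [← rpow_add hxa, ← rpow_add hxa]
    ring_nf
  rw [hscaled, integral_rpow_mul_one_sub_rpow hp hq, smul_eq_mul,
    eq_inv_mul_iff_mul_eq₀ hxa.ne'] at hsubst
  rw [← hsubst, ← hpow]
  ring

theorem hasSum_intervalIntegral_mul_powerSeries {g f : ℝ → ℝ} {c : ℕ → ℝ} {a x R : ℝ}
    (hax : a ≤ x) (hR : x - a ≤ R) (hc : Summable fun k => |c k| * R ^ k)
    (hf : ∀ t ∈ Ioc a x, HasSum (fun k => c k * (t - a) ^ k) (f t))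
    (hg : IntervalIntegrable g volume a x) :
    HasSum (fun k => c k * ∫ t in a..x, g t * (t - a) ^ k) (∫ t in a..x, g t * f t) := by
  simp_rw [← intervalIntegral.integral_const_mul]
  refine intervalIntegral.hasSum_integral_of_dominated_convergence
    (fun k t => |c k| * R ^ k * ‖g t‖) (fun k => ?_) (fun k => ?_) ?_ ?_ ?_
  · have hpow : Continuous fun t : ℝ => (t - a) ^ k := by fun_prop
    exact (hg.def'.aestronglyMeasurable.mul hpow.aestronglyMeasurable).const_mul _
  · refine ae_of_all _ fun t ht => ?_
    rw [uIoc_of_le hax] at ht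
    have hta : 0 ≤ t - a := by linarith [ht.1]
    have hpow_le : (t - a) ^ k ≤ R ^ k := pow_le_pow_left₀ hta (by linarith [ht.2]) k
    simp only [norm_mul, norm_pow, Real.norm_eq_abs, abs_of_nonneg hta]
    calc |c k| * (|g t| * (t - a) ^ k) = |c k| * (t - a) ^ k * |g t| := by ring
      _ ≤ |c k| * R ^ k * |g t| := by gcongr
  · exact ae_of_all _ fun t _ => hc.mul_right _
  · simp_rw [tsum_mul_right]
    exact hg.norm.const_mul _
  · refine ae_of_all _ fun t ht => ?_
    rw [uIoc_of_le hax] at ht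
    simpa only [mul_left_comm] using (hf t ht).mul_left (g t)

/-- Term-by-term Riemann–Liouville fractional integration (`α < 0`) of a
function given by a power series around `a` whose radius of convergence
exceeds `x - a`:
`(1/Γ(-α)) ∫_a^x (x-t)^{-α-1} f(t) dt
  = Σ_k c_k · Γ(k+1)/Γ(k-α+1) · (x-a)^{k-α}`, the series being convergent. -/
theorem riemannLiouville_deriv_powerSeries_neg_order
    (f : ℝ → ℝ) (c : ℕ → ℝ) (a x α R : ℝ) (hax : a < x) (hα : α < 0)
    (hR : x - a < R) (hRsum : Summable fun k => |c k| * R ^ k)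
    (hf : ∀ t, |t - a| < R → HasSum (fun k => c k * (t - a) ^ k) (f t)) :
    HasSum
      (fun k : ℕ => c k * (Real.Gamma ((k : ℝ) + 1) / Real.Gamma ((k : ℝ) - α + 1))
        * (x - a) ^ ((k : ℝ) - α))
      ((1 / Real.Gamma (-α)) * ∫ t in a..x, (x - t) ^ (-α - 1) * f t) := by
  have hΓ : Gamma (-α) ≠ 0 := (Gamma_pos_of_pos (neg_pos.2 hα)).ne'
  have hkernel : IntervalIntegrable (fun t => (x - t) ^ (-α - 1)) volume a x := by
    simpa using (intervalIntegral.intervalIntegrable_rpow' (a := x - a) (b := 0)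
      (by linarith : -1 < -α - 1)).comp_sub_left x
  have hf' : ∀ t ∈ Ioc a x, HasSum (fun k => c k * (t - a) ^ k) (f t) := fun t ht =>
    hf t (by rw [abs_of_pos (sub_pos.2 ht.1)]; linarith [ht.2])
  have hterm (k : ℕ) : ∫ t in a..x, (x - t) ^ (-α - 1) * (t - a) ^ k
      = Gamma (k + 1) * Gamma (-α) / Gamma (k - α + 1) * (x - a) ^ ((k : ℝ) - α) := by
    have hbeta := integral_sub_rpow_mul_rpow_sub hax (Nat.cast_add_one_pos k) (neg_pos.2 hα)
    simp only [add_sub_cancel_right, rpow_natCast] at hbeta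
    rw [hbeta]
    ring_nf
  have hterms :
      (fun k : ℕ => c k * (Gamma (k + 1) / Gamma (k - α + 1)) * (x - a) ^ ((k : ℝ) - α)) =
        fun k => 1 / Gamma (-α) * (c k * ∫ t in a..x, (x - t) ^ (-α - 1) * (t - a) ^ k) := by
    funext k
    rw [hterm]
    field_simp
  rw [hterms]
  exact (hasSum_intervalIntegral_mul_powerSeries hax.le hR.le hRsum hf' hkernel).mul_left _
end

section
/- Let a < x be real numbers, let α > 0 be a non-integer real number with n = ⌈α⌉, and let f be given on [a, x] by a convergent power series f(t) = Σ_{k=0}^∞ c_k (t − a)^k whose radius of convergence exceeds x − a. Then the Riemann–Liouville fractional derivative of order α of f with base point a can be computed term by term: the n-th derivative with respect to x of y ↦ (1/Γ(n−α)) ∫_a^y (y − t)^{n−α−1} f(t) dt, evaluated at x, equals Σ_{k=0}^∞ c_k · (Γ(k+1)/Γ(k−α+1)) · (x − a)^{k−α}, the series on the right-hand side being convergent. -/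
/-!
Put `b = n - α ∈ (0, 1)`; the function being differentiated is the Riemann–Liouville integral
`I^b f`. Integrating the power series of `f` term by term against the kernel `(y - t)^(b-1)`
(a Beta integral) gives `I^b f(y) = ∑ c_k Γ(k+1)/Γ(k+b+1) (y-a)^(k+b)` on `(a, a + R)`. This
generalized power series can be differentiated term by term there, because on subintervals
`[a + δ, a + σ]` with `0 < δ` and `σ < R` the derived series are dominated by geometric ones.
Differentiating `n` times multiplies the `k`-th term by the falling factorial
`(k+b)(k+b-1)⋯(k+b-n+1) = Γ(k+b+1)/Γ(k-α+1)`.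
-/

open Real Set Filter Topology Polynomial MeasureTheory Interval

theorem integral_rpow_mul_sub_pow_eq_Gamma {A b : ℝ} (hA : 0 < A) (hb : 0 < b) (k : ℕ) :
    ∫ u in (0 : ℝ)..A, u ^ (b - 1) * (A - u) ^ k
      = Gamma b * Gamma (k + 1) / Gamma (b + k + 1) * A ^ (b + k) := by
  have hβ := Complex.betaIntegral_scaled b (k + 1) hA
  have hΓ := Complex.Gamma_mul_Gamma_eq_betaIntegral (s := b) (t := k + 1) (by simpa using hb)
    (by simpa using k.cast_add_one_pos)
  have hΓ₀ : Complex.Gamma (b + (k + 1)) ≠ 0 :=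
    Complex.Gamma_ne_zero_of_re_pos (by simpa using add_pos hb k.cast_add_one_pos)
  apply Complex.ofReal_injective
  rw [← intervalIntegral.integral_ofReal]
  have hcongr : ∫ u in (0 : ℝ)..A, (((u ^ (b - 1) * (A - u) ^ k : ℝ)) : ℂ)
      = ∫ u in (0 : ℝ)..A,
          (u : ℂ) ^ ((b : ℂ) - 1) * ((A : ℂ) - u) ^ ((k : ℂ) + 1 - 1) := by
    refine intervalIntegral.integral_congr fun u hu => ?_
    rw [uIcc_of_le hA.le] at hu
    rw [add_sub_cancel_right, Complex.cpow_natCast]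
    push_cast [Complex.ofReal_cpow hu.1]
    rfl
  have hB : Complex.betaIntegral b (k + 1)
      = Complex.Gamma b * Complex.Gamma (k + 1) / Complex.Gamma (b + (k + 1)) := by
    rw [hΓ]; field_simp
  rw [hcongr, hβ, hB]
  push_cast [← Complex.Gamma_ofReal, Complex.ofReal_cpow hA.le]
  ring_nf

noncomputable def riemannLiouvilleIntegral (a b : ℝ) (f : ℝ → ℝ) (y : ℝ) : ℝ :=
  (1 / Gamma b) * ∫ t in a..y, (y - t) ^ (b - 1) * f t

theorem riemannLiouvilleIntegral_sub_pow {a b y : ℝ} (hay : a < y) (hb : 0 < b) (k : ℕ) :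
    riemannLiouvilleIntegral a b (fun t => (t - a) ^ k) y
      = Gamma (k + 1) / Gamma (k + b + 1) * (y - a) ^ (k + b) := by
  have hsub := intervalIntegral.integral_comp_sub_left
    (fun u => u ^ (b - 1) * (y - a - u) ^ k) (a := a) (b := y) y
  simp only [sub_self, sub_sub_sub_cancel_left] at hsub
  rw [riemannLiouvilleIntegral, hsub, integral_rpow_mul_sub_pow_eq_Gamma (sub_pos.2 hay) hb,
    add_comm (k : ℝ) b]
  field_simp [(Gamma_pos_of_pos hb).ne']

theorem intervalIntegrable_sub_rpow {a y b : ℝ} (hb : 0 < b) :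
    IntervalIntegrable (fun t => (y - t) ^ (b - 1)) volume a y := by
  simpa using ((intervalIntegral.intervalIntegrable_rpow' (a := 0) (b := y - a)
    (r := b - 1) (by linarith)).comp_sub_left y).symm

theorem hasSum_intervalIntegral_mul_of_powerSeries {f w : ℝ → ℝ} {c : ℕ → ℝ}
    {a y R : ℝ} (hay : a ≤ y) (hyR : y - a < R) (hc : Summable fun k => |c k| * R ^ k)
    (hf : ∀ t, |t - a| < R → HasSum (fun k => c k * (t - a) ^ k) (f t))
    (hw : IntervalIntegrable w volume a y) :
    HasSum (fun k => c k * ∫ t in a..y, w t * (t - a) ^ k) (∫ t in a..y, w t * f t) := by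
  have hmem : ∀ t ∈ Ι a y, 0 < t - a ∧ t - a ≤ y - a := fun t ht => by
    rw [uIoc_of_le hay] at ht; exact ⟨by linarith [ht.1], by linarith [ht.2]⟩
  simp_rw [← intervalIntegral.integral_const_mul]
  refine intervalIntegral.hasSum_integral_of_dominated_convergence
    (fun k t => |w t| * (|c k| * R ^ k)) (fun k => ?_) (fun k => ?_) ?_ ?_ ?_
  · have hpow : Continuous fun t => (t - a) ^ k := by fun_prop
    exact ((hw.mul_continuousOn hpow.continuousOn).const_mul (c k)).def'.1
  · refine ae_of_all _ fun t ht => ?_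
    obtain ⟨h0, h1⟩ := hmem t ht
    rw [norm_mul, norm_mul, Real.norm_eq_abs, Real.norm_eq_abs, norm_pow, Real.norm_eq_abs,
      abs_of_pos h0, mul_left_comm]
    gcongr
    linarith
  · exact ae_of_all _ fun t _ => hc.mul_left _
  · simp_rw [tsum_mul_left]
    exact hw.norm.mul_const _
  · exact ae_of_all _ fun t ht => by
      obtain ⟨h0, h1⟩ := hmem t ht
      simpa [mul_left_comm] using (hf t (by rw [abs_of_pos h0]; linarith)).mul_left (w t)

theorem hasSum_riemannLiouvilleIntegral_of_powerSeries {f : ℝ → ℝ} {c : ℕ → ℝ}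
    {a b y R : ℝ} (hb : 0 < b) (hay : a < y) (hyR : y - a < R)
    (hc : Summable fun k => |c k| * R ^ k)
    (hf : ∀ t, |t - a| < R → HasSum (fun k => c k * (t - a) ^ k) (f t)) :
    HasSum (fun k : ℕ => c k * (Gamma (k + 1) / Gamma (k + b + 1)) * (y - a) ^ ((k : ℝ) + b))
      (riemannLiouvilleIntegral a b f y) := by
  refine ((hasSum_intervalIntegral_mul_of_powerSeries hay.le hyR hc hf
    (intervalIntegrable_sub_rpow hb)).mul_left (1 / Gamma b)).congr_fun fun k => ?_
  rw [mul_assoc, ← riemannLiouvilleIntegral_sub_pow hay hb k, riemannLiouvilleIntegral]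
  ring

theorem summable_abs_descPochhammer_eval_mul_geometric (j : ℕ) (β : ℝ) {r : ℝ}
    (hr₀ : 0 ≤ r) (hr : r < 1) :
    Summable fun k : ℕ => |(descPochhammer ℝ j).eval ((k : ℝ) + β)| * r ^ k := by
  have hdeg : ((descPochhammer ℝ j).comp (X + C β)).degree ≤ (X ^ j : ℝ[X]).degree := by
    rw [degree_X_pow]
    refine degree_le_natDegree.trans ?_
    rw [natDegree_comp, descPochhammer_natDegree, natDegree_X_add_C, mul_one]
  have hP : (fun k : ℕ => ((descPochhammer ℝ j).comp (X + C β)).eval (k : ℝ)) =O[atTop]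
      fun k : ℕ => (X ^ j : ℝ[X]).eval (k : ℝ) :=
    (isBigO_atTop_of_degree_le _ _ hdeg).comp_tendsto tendsto_natCast_atTop_atTop
  refine summable_of_isBigO_nat
    (summable_pow_mul_geometric_of_norm_lt_one j (by rwa [norm_of_nonneg hr₀])) ?_
  simpa using hP.norm_left.mul (Asymptotics.isBigO_refl (fun k : ℕ => r ^ k) atTop)

theorem Real.rpow_le_rpow_add_rpow_of_mem_Icc {δ σ z : ℝ} (hδ : 0 < δ) (hz : z ∈ Icc δ σ)
    (e : ℝ) : z ^ e ≤ δ ^ e + σ ^ e := by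
  have hz₀ : 0 < z := hδ.trans_le hz.1
  rcases le_total 0 e with he | he
  · exact (rpow_le_rpow hz₀.le hz.2 he).trans (le_add_of_nonneg_left (rpow_nonneg hδ.le e))
  · exact (rpow_le_rpow_of_nonpos hδ hz.1 he).trans
      (le_add_of_nonneg_right (rpow_nonneg (hz₀.le.trans hz.2) e))

theorem exists_abs_mul_pow_le_of_summable_mul_rpow {d : ℕ → ℝ} {ρ β : ℝ} (hρ : 0 < ρ)
    (h : Summable fun k : ℕ => d k * ρ ^ ((k : ℝ) + β)) :
    ∃ M, ∀ k, |d k| * ρ ^ k ≤ M := by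
  obtain ⟨M, hM⟩ := h.tendsto_atTop_zero.abs.bddAbove_range
  refine ⟨M / ρ ^ β, fun k => ?_⟩
  rw [le_div_iff₀ (rpow_pos_of_pos hρ β)]
  convert hM (mem_range_self k) using 1
  rw [abs_mul, abs_of_pos (rpow_pos_of_pos hρ _), rpow_add hρ, rpow_natCast, mul_assoc]

theorem hasDerivAt_descPochhammer_eval_mul_sub_rpow (s a : ℝ) (j : ℕ) {y : ℝ} (hy : a < y) :
    HasDerivAt (fun z => (descPochhammer ℝ j).eval s * (z - a) ^ (s - j))
      ((descPochhammer ℝ (j + 1)).eval s * (y - a) ^ (s - (j + 1 : ℕ))) y := by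
  refine ((((hasDerivAt_id y).sub_const a).rpow_const (p := s - j)
    (Or.inl (sub_pos.2 hy).ne')).const_mul ((descPochhammer ℝ j).eval s)).congr_deriv ?_
  rw [descPochhammer_succ_eval, Nat.cast_succ, ← sub_sub, id]
  ring

section GeneralizedPowerSeries

variable {d : ℕ → ℝ} {a β R : ℝ}

/-- The convergence at a radius `ρ > σ` bounds `|d k| * ρ ^ k`, and the polynomial factor
`descPochhammer` is absorbed by the geometric factor `(σ / ρ) ^ k`. -/
theorem exists_summable_bound_descPochhammer_mul_sub_rpow
    (hd : ∀ y ∈ Ioo a (a + R), Summable fun k : ℕ => d k * (y - a) ^ ((k : ℝ) + β))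
    (j : ℕ) {y : ℝ} (hy : y ∈ Ioo a (a + R)) :
    ∃ δ σ, 0 < δ ∧ y ∈ Ioo (a + δ) (a + σ) ∧ ∃ u : ℕ → ℝ, Summable u ∧
      ∀ k, ∀ z ∈ Ioo (a + δ) (a + σ),
        |d k * ((descPochhammer ℝ j).eval ((k : ℝ) + β) * (z - a) ^ ((k : ℝ) + β - j))|
          ≤ u k := by
  obtain ⟨hay, hyR⟩ := hy
  obtain ⟨δ, hδ, hδy⟩ := exists_between (sub_pos.2 hay)
  obtain ⟨σ, hyσ, hσR⟩ := exists_between (sub_lt_iff_lt_add'.2 hyR)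
  obtain ⟨ρ, hσρ, hρR⟩ := exists_between hσR
  have hσ : 0 < σ := by linarith
  have hρ : 0 < ρ := by linarith
  obtain ⟨M, hM⟩ := exists_abs_mul_pow_le_of_summable_mul_rpow hρ
    (by simpa using hd (a + ρ) ⟨by linarith, by linarith⟩)
  set P := fun k : ℕ => |(descPochhammer ℝ j).eval ((k : ℝ) + β)|
  set E := δ ^ (β - j) + σ ^ (β - j)
  have hE : 0 ≤ E := add_nonneg (rpow_nonneg hδ.le _) (rpow_nonneg hσ.le _)
  refine ⟨δ, σ, hδ, ⟨by linarith, by linarith⟩, fun k => M * (P k * (σ / ρ) ^ k) * E,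
    ?_, ?_⟩
  · exact ((summable_abs_descPochhammer_eval_mul_geometric j β (by positivity)
      ((div_lt_one hρ).2 hσρ)).mul_left M).mul_right E
  intro k z hz
  have hz₀ : 0 < z - a := by linarith [hz.1]
  have hzk : (z - a) ^ k ≤ σ ^ k := pow_le_pow_left₀ hz₀.le (by linarith [hz.2]) k
  have hzE : (z - a) ^ (β - j) ≤ E :=
    rpow_le_rpow_add_rpow_of_mem_Icc hδ ⟨by linarith [hz.1], by linarith [hz.2]⟩ _
  calc |d k * ((descPochhammer ℝ j).eval ((k : ℝ) + β) * (z - a) ^ ((k : ℝ) + β - j))|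
      = |d k| * P k * ((z - a) ^ k * (z - a) ^ (β - j)) := by
        rw [add_sub_assoc, rpow_add hz₀, rpow_natCast, abs_mul, abs_mul,
          abs_of_pos (by positivity : 0 < (z - a) ^ k * (z - a) ^ (β - j)), mul_assoc]
    _ ≤ |d k| * P k * (σ ^ k * E) := by gcongr
    _ = |d k| * ρ ^ k * (P k * (σ / ρ) ^ k) * E := by
        rw [div_pow]; field_simp
    _ ≤ M * (P k * (σ / ρ) ^ k) * E := by gcongr; exact hM k

theorem hasSum_iteratedDeriv_tsum_mul_sub_rpow
    (hd : ∀ y ∈ Ioo a (a + R), Summable fun k : ℕ => d k * (y - a) ^ ((k : ℝ) + β))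
    (j : ℕ) : ∀ y ∈ Ioo a (a + R),
      HasSum (fun k : ℕ =>
          d k * ((descPochhammer ℝ j).eval ((k : ℝ) + β) * (y - a) ^ ((k : ℝ) + β - j)))
        (iteratedDeriv j (fun z => ∑' k : ℕ, d k * (z - a) ^ ((k : ℝ) + β)) y) := by
  induction j with
  | zero => intro y hy; simpa using (hd y hy).hasSum
  | succ j ih =>
    intro y hy
    obtain ⟨δ, σ, hδ, hyT, u, hu, hbound⟩ :=
      exists_summable_bound_descPochhammer_mul_sub_rpow hd (j + 1) hy
    have hderiv : ∀ (k : ℕ), ∀ z ∈ Ioo (a + δ) (a + σ),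
        HasDerivAt (fun w =>
            d k * ((descPochhammer ℝ j).eval ((k : ℝ) + β) * (w - a) ^ ((k : ℝ) + β - j)))
          (d k * ((descPochhammer ℝ (j + 1)).eval ((k : ℝ) + β)
            * (z - a) ^ ((k : ℝ) + β - (j + 1 : ℕ)))) z := fun k z hz =>
      (hasDerivAt_descPochhammer_eval_mul_sub_rpow _ a j (by linarith [hz.1])).const_mul (d k)
    have hlocal : iteratedDeriv j (fun z => ∑' k : ℕ, d k * (z - a) ^ ((k : ℝ) + β))
        =ᶠ[𝓝 y] fun z => ∑' k : ℕ,
          d k * ((descPochhammer ℝ j).eval ((k : ℝ) + β) * (z - a) ^ ((k : ℝ) + β - j)) :=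
      eventually_of_mem (isOpen_Ioo.mem_nhds hy) fun z hz => (ih z hz).tsum_eq.symm
    rw [iteratedDeriv_succ, hlocal.deriv_eq, (hasDerivAt_tsum_of_isPreconnected hu isOpen_Ioo
      isPreconnected_Ioo hderiv hbound hyT (ih y hy).summable hyT).deriv]
    exact (hu.of_norm_bounded fun k => hbound k y hyT).hasSum

end GeneralizedPowerSeries

theorem Real.Gamma_add_one_eq_descPochhammer_eval_mul {s : ℝ} {n : ℕ}
    (hs : ∀ i < n, s ≠ i) :
    Gamma (s + 1) = (descPochhammer ℝ n).eval s * Gamma (s + 1 - n) := by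
  induction n with
  | zero => simp
  | succ n ih =>
    rw [ih fun i hi => hs i (hi.trans n.lt_succ_self), descPochhammer_succ_eval, Nat.cast_succ,
      show s + 1 - n = (s - n) + 1 by ring, Gamma_add_one (sub_ne_zero.2 (hs n n.lt_succ_self))]
    ring_nf

theorem riemannLiouville_deriv_powerSeries_pos_order_general
    (f : ℝ → ℝ) (c : ℕ → ℝ) (a x α R : ℝ) (n : ℕ) (hax : a < x)
    (hαint : ∀ m : ℤ, α ≠ (m : ℝ)) (hn : n = ⌈α⌉₊)
    (hR : x - a < R) (hRsum : Summable fun k => |c k| * R ^ k)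
    (hf : ∀ t, |t - a| < R → HasSum (fun k => c k * (t - a) ^ k) (f t)) :
    HasSum
      (fun k : ℕ => c k * (Real.Gamma ((k : ℝ) + 1) / Real.Gamma ((k : ℝ) - α + 1))
        * (x - a) ^ ((k : ℝ) - α))
      (iteratedDeriv n
        (fun y => (1 / Real.Gamma ((n : ℝ) - α)) *
          ∫ t in a..y, (y - t) ^ ((n : ℝ) - α - 1) * f t) x) := by
  have hαn : α < n := (hn ▸ Nat.le_ceil α).lt_of_ne (by exact_mod_cast hαint n)
  set b := (n : ℝ) - α
  have hb : 0 < b := sub_pos.2 hαn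
  have hkb : ∀ k i : ℕ, (k : ℝ) + b ≠ i := fun k i h =>
    hαint (k + n - i) (by push_cast; linarith)
  have hx : x ∈ Ioo a (a + R) := ⟨hax, by linarith⟩
  have hI : ∀ y ∈ Ioo a (a + R), HasSum
      (fun k : ℕ => c k * (Gamma (k + 1) / Gamma (k + b + 1)) * (y - a) ^ ((k : ℝ) + b))
      (riemannLiouvilleIntegral a b f y) := fun y hy =>
    hasSum_riemannLiouvilleIntegral_of_powerSeries hb hy.1 (by linarith [hy.2]) hRsum hf
  have hlocal : riemannLiouvilleIntegral a b f =ᶠ[𝓝 x] fun y => ∑' k : ℕ,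
      c k * (Gamma (k + 1) / Gamma (k + b + 1)) * (y - a) ^ ((k : ℝ) + b) :=
    eventually_of_mem (isOpen_Ioo.mem_nhds hx) fun y hy => (hI y hy).tsum_eq.symm
  change HasSum _ (iteratedDeriv n (riemannLiouvilleIntegral a b f) x)
  rw [hlocal.iteratedDeriv_eq]
  convert hasSum_iteratedDeriv_tsum_mul_sub_rpow (fun y hy => (hI y hy).summable) n x hx
    using 2 with k
  have hP : (descPochhammer ℝ n).eval ((k : ℝ) + b) ≠ 0 := by
    rw [descPochhammer_eval_eq_prod_range]
    exact Finset.prod_ne_zero_iff.2 fun i _ => sub_ne_zero.2 (hkb k i)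
  rw [Gamma_add_one_eq_descPochhammer_eval_mul fun i _ => hkb k i,
    show (k : ℝ) + b + 1 - n = k - α + 1 by ring, show (k : ℝ) + b - n = k - α by ring]
  field_simp

/-- Term-by-term Riemann–Liouville fractional differentiation (`α > 0`
non-integer, `n = ⌈α⌉`) of a function given by a power series around `a`
whose radius of convergence exceeds `x - a`:
`(dⁿ/dxⁿ)[ (1/Γ(n-α)) ∫_a^x (x-t)^{n-α-1} f(t) dt ]
  = Σ_k c_k · Γ(k+1)/Γ(k-α+1) · (x-a)^{k-α}`, the series being convergent. -/
theorem riemannLiouville_deriv_powerSeries_pos_order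
    (f : ℝ → ℝ) (c : ℕ → ℝ) (a x α R : ℝ) (n : ℕ) (hax : a < x) (hα : 0 < α)
    (hαint : ∀ m : ℤ, α ≠ (m : ℝ)) (hn : n = ⌈α⌉₊)
    (hR : x - a < R) (hRsum : Summable fun k => |c k| * R ^ k)
    (hf : ∀ t, |t - a| < R → HasSum (fun k => c k * (t - a) ^ k) (f t)) :
    HasSum
      (fun k : ℕ => c k * (Real.Gamma ((k : ℝ) + 1) / Real.Gamma ((k : ℝ) - α + 1))
        * (x - a) ^ ((k : ℝ) - α))
      (iteratedDeriv n
        (fun y => (1 / Real.Gamma ((n : ℝ) - α)) *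
          ∫ t in a..y, (y - t) ^ ((n : ℝ) - α - 1) * f t) x) :=
  riemannLiouville_deriv_powerSeries_pos_order_general f c a x α R n hax hαint hn hR hRsum hf
end
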